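/- arXiv:1308.3562 — 6 statements merged into one kernel-verified Lean document; each statement's English description precedes it below -/
import Mathlib

section
/- Let X be a complex Banach space and A, B ∈ B(X). If Fix(AT) = Fix(BT) for every rank-one operator T ∈ B(X), then A = B. -/
/-!
If `A x ≠ 0`, Hahn–Banach gives a functional `f` with `f (A x) = 1`. Then `A x` is a fixed point
of `A (x ⊗ f)`, hence of `B (x ⊗ f)`, which sends it to `f (A x) • B x = B x`. So `A` and `B`
agree wherever one of them does not vanish.
-/

open ContinuousLinearMap

variable {X : Type*} [NormedAddCommGroup X] [NormedSpace ℂ X] [CompleteSpace X]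

section FixedPoints

variable {R E F : Type*} [Semiring R] [TopologicalSpace R]
  [TopologicalSpace E] [AddCommMonoid E] [Module R E]
  [TopologicalSpace F] [AddCommMonoid F] [Module R F] [ContinuousSMul R F]

theorem apply_eq_of_fixedPoints_comp_smulRight_eq (A B : F →L[R] E) (x : F) (f : E →L[R] R)
    (hf : f (A x) = 1)
    (h : {y | (A.comp (f.smulRight x)) y = y} = {y | (B.comp (f.smulRight x)) y = y}) :
    B x = A x := by
  have hA : A x ∈ {y | (A.comp (f.smulRight x)) y = y} := by
    simp only [Set.mem_ofPred_eq, comp_apply, smulRight_apply, hf, one_smul]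
  rw [h] at hA
  simpa only [Set.mem_ofPred_eq, comp_apply, smulRight_apply, hf, one_smul] using hA

end FixedPoints

theorem apply_eq_of_fixedPoints_rankOne_eq {𝕜 E : Type*} [Field 𝕜] [TopologicalSpace 𝕜]
    [IsTopologicalRing 𝕜] [TopologicalSpace E] [AddCommGroup E] [Module 𝕜 E]
    [ContinuousSMul 𝕜 E] [SeparatingDual 𝕜 E] {A B : E →L[𝕜] E}
    (h : ∀ T : E →L[𝕜] E, (∃ (x : E) (f : E →L[𝕜] 𝕜), x ≠ 0 ∧ f ≠ 0 ∧ T = f.smulRight x) →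
      {y : E | (A * T) y = y} = {y : E | (B * T) y = y})
    {x : E} (hAx : A x ≠ 0) : B x = A x := by
  obtain ⟨f, hf⟩ := SeparatingDual.exists_eq_one (R := 𝕜) hAx
  have hx : x ≠ 0 := fun hx ↦ hAx (by rw [hx, map_zero])
  have hf₀ : f ≠ 0 := fun hf₀ ↦ by simp [hf₀] at hf
  exact apply_eq_of_fixedPoints_comp_smulRight_eq A B x f hf (h _ ⟨x, f, hx, hf₀, rfl⟩)

theorem stmt2 (A B : X →L[ℂ] X)
    (h : ∀ T : X →L[ℂ] X, (∃ (x : X) (f : X →L[ℂ] ℂ), x ≠ 0 ∧ f ≠ 0 ∧ T = f.smulRight x) →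
      {y : X | (A * T) y = y} = {y : X | (B * T) y = y}) : A = B := by
  ext x
  by_cases hAx : A x = 0
  · by_cases hBx : B x = 0
    · rw [hAx, hBx]
    · exact apply_eq_of_fixedPoints_rankOne_eq (fun T hT ↦ (h T hT).symm) hBx
  · exact (apply_eq_of_fixedPoints_rankOne_eq h hAx).symm
end

section
/- Let X be a complex Banach space and φ : B(X) → B(X) a surjective map satisfying Fix(AB) = Fix(φ(A)φ(B)) for all A ∈ B(X) and all rank-one B ∈ B(X). Then φ is injective. -/
/-!
If `φ A₁ = φ A₂`, then `Fix(A₁ B) = Fix(φ A₁ φ B) = Fix(A₂ B)` for every rank-one `B`. Where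
`A₁ x ≠ 0`, pick `g` with `g (A₁ x) = 1`: then `A₁ x` is fixed by `A₁ (x ⊗ g)`, hence by
`A₂ (x ⊗ g)`, which maps it to `g (A₁ x) • A₂ x = A₂ x`. So `A₁` and `A₂` agree wherever one of
them is nonzero, i.e. everywhere.
-/

open ContinuousLinearMap

variable {X : Type*} [NormedAddCommGroup X] [NormedSpace ℂ X] [CompleteSpace X]

namespace ContinuousLinearMap

variable {R V : Type*} [Field R] [TopologicalSpace R] [AddCommGroup V] [TopologicalSpace V]
  [Module R V] [ContinuousSMul R V]

def IsRankOne (B : V →L[R] V) : Prop :=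
  ∃ (x : V) (f : V →L[R] R), x ≠ 0 ∧ f ≠ 0 ∧ B = f.smulRight x

theorem apply_eq_of_fixedPoints_mul_smulRight_eq {A₁ A₂ : V →L[R] V} {x : V} {g : V →L[R] R}
    (hg : g (A₁ x) = 1)
    (hfix : Function.fixedPoints ⇑(A₁ * g.smulRight x) =
      Function.fixedPoints ⇑(A₂ * g.smulRight x)) :
    A₂ x = A₁ x := by
  have hA₁ : A₁ x ∈ Function.fixedPoints ⇑(A₁ * g.smulRight x) := by
    simp [Function.mem_fixedPoints, Function.IsFixedPt, hg]
  rw [hfix] at hA₁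
  simpa [Function.mem_fixedPoints, Function.IsFixedPt, hg] using hA₁

variable [IsTopologicalRing R] [SeparatingDual R V]

theorem apply_eq_of_fixedPoints_mul_rankOne_eq {A₁ A₂ : V →L[R] V}
    (hfix : ∀ B : V →L[R] V, IsRankOne B →
      Function.fixedPoints ⇑(A₁ * B) = Function.fixedPoints ⇑(A₂ * B))
    {x : V} (hx : A₁ x ≠ 0) : A₂ x = A₁ x := by
  have hx0 : x ≠ 0 := by rintro rfl; simp at hx
  obtain ⟨g, hg⟩ := SeparatingDual.exists_eq_one (R := R) hx
  have hg0 : g ≠ 0 := by rintro rfl; simp at hg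
  exact apply_eq_of_fixedPoints_mul_smulRight_eq hg (hfix _ ⟨x, g, hx0, hg0, rfl⟩)

theorem eq_of_fixedPoints_mul_rankOne_eq {A₁ A₂ : V →L[R] V}
    (hfix : ∀ B : V →L[R] V, IsRankOne B →
      Function.fixedPoints ⇑(A₁ * B) = Function.fixedPoints ⇑(A₂ * B)) :
    A₁ = A₂ := by
  ext x
  by_cases h₁ : A₁ x = 0
  · by_cases h₂ : A₂ x = 0
    · rw [h₁, h₂]
    · exact apply_eq_of_fixedPoints_mul_rankOne_eq (fun B hB => (hfix B hB).symm) h₂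
  · exact (apply_eq_of_fixedPoints_mul_rankOne_eq hfix h₁).symm

end ContinuousLinearMap

theorem stmt4_general (φ : (X →L[ℂ] X) → (X →L[ℂ] X))
    (h : ∀ A B : X →L[ℂ] X,
      (∃ (x : X) (f : X →L[ℂ] ℂ), x ≠ 0 ∧ f ≠ 0 ∧ B = f.smulRight x) →
      {y : X | (A * B) y = y} = {y : X | (φ A * φ B) y = y}) :
    Function.Injective φ := by
  intro A₁ A₂ hφ
  refine eq_of_fixedPoints_mul_rankOne_eq fun B hB => ?_
  exact (h A₁ B hB).trans (hφ ▸ (h A₂ B hB).symm)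

theorem stmt4 (φ : (X →L[ℂ] X) → (X →L[ℂ] X))
    (hsurj : Function.Surjective φ)
    (h : ∀ A B : X →L[ℂ] X,
      (∃ (x : X) (f : X →L[ℂ] ℂ), x ≠ 0 ∧ f ≠ 0 ∧ B = f.smulRight x) →
      {y : X | (A * B) y = y} = {y : X | (φ A * φ B) y = y}) :
    Function.Injective φ :=
  stmt4_general φ h
end

section
/- Let X be a complex Banach space and φ : B(X) → B(X) a surjective map satisfying Fix(AB) = Fix(φ(A)φ(B)) for all A ∈ B(X) and all rank-one B. Then for every rank-one operator T, φ(T) is rank-one. -/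
/-!
Write `T = x ⊗ f` and `S = φ T`. With `B = T` the hypothesis says that `A (f y • x) = y` iff
`φ A (S y) = y`, for every operator `A` and vector `y`. Pick `z` with `f z = 1`; then `S z ≠ 0`.
If some `S u` were not a multiple of `S z`, surjectivity of `φ` would give an `A` with
`φ A (S u) = u` and `φ A (S z) = z`; hence `A x = z` and `u = A (f u • x) = f u • z`, so that
`S u = f u • S z` after all. Thus `S` has range the line through `S z`, i.e. it is rank one.
-/

open ContinuousLinearMap

lemma ContinuousLinearMap.eq_smulRight_of_forall_mem_span {𝕜 V W : Type*} [Semiring 𝕜]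
    [TopologicalSpace 𝕜] [AddCommMonoid V] [TopologicalSpace V] [Module 𝕜 V] [ContinuousSMul 𝕜 V]
    [AddCommMonoid W] [TopologicalSpace W] [Module 𝕜 W] {S : W →L[𝕜] V} {s : V}
    {g : StrongDual 𝕜 V} (hg : g s = 1) (hS : ∀ u, S u ∈ 𝕜 ∙ s) : S = (g ∘L S).smulRight s := by
  ext u
  obtain ⟨c, hc⟩ := Submodule.mem_span_singleton.1 (hS u)
  simp [← hc, hg]

section SeparatingDual

variable {𝕜 V W : Type*} [Field 𝕜] [TopologicalSpace 𝕜] [IsTopologicalRing 𝕜]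
  [AddCommGroup V] [TopologicalSpace V] [Module 𝕜 V] [SeparatingDual 𝕜 V]

lemma SeparatingDual.exists_eq_one_eq_zero_of_notMem_span {a b : V} (hb : b ≠ 0)
    (ha : a ∉ 𝕜 ∙ b) : ∃ g : StrongDual 𝕜 V, g a = 1 ∧ g b = 0 := by
  obtain ⟨v, hv⟩ := exists_eq_one (R := 𝕜) hb
  have hne : a - v a • b ≠ 0 := fun h0 =>
    ha (Submodule.mem_span_singleton.2 ⟨v a, (sub_eq_zero.1 h0).symm⟩)
  obtain ⟨u, hu⟩ := exists_eq_one (R := 𝕜) hne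
  refine ⟨u - u b • v, ?_, by simp [hv]⟩
  simp only [map_sub, map_smul, smul_eq_mul, sub_apply, smul_apply] at hu ⊢
  linear_combination hu

lemma SeparatingDual.exists_continuousLinearMap_apply_eq_apply_eq [AddCommGroup W]
    [TopologicalSpace W] [Module 𝕜 W] [ContinuousAdd W] [ContinuousSMul 𝕜 W] {a b : V}
    (hb : b ≠ 0) (ha : a ∉ 𝕜 ∙ b) (a' b' : W) : ∃ B : V →L[𝕜] W, B a = a' ∧ B b = b' := by
  obtain ⟨g, hga, hgb⟩ := exists_eq_one_eq_zero_of_notMem_span hb ha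
  obtain ⟨v, hv⟩ := exists_eq_one (R := 𝕜) hb
  exact ⟨g.smulRight a' + (v - v a • g).smulRight b', by simp [hga], by simp [hgb, hv]⟩

end SeparatingDual

section FixedPoints

variable {𝕜 V : Type*} [Field 𝕜] [TopologicalSpace 𝕜] [IsTopologicalRing 𝕜]
  [AddCommGroup V] [TopologicalSpace V] [Module 𝕜 V] [ContinuousSMul 𝕜 V] [SeparatingDual 𝕜 V]
  {φ : (V →L[𝕜] V) → (V →L[𝕜] V)}

lemma apply_ne_zero_of_apply_eq_iff {T S : V →L[𝕜] V}
    (hfix : ∀ A y, A (T y) = y ↔ φ A (S y) = y) {y : V} (hy : T y ≠ 0) : S y ≠ 0 := by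
  obtain ⟨g, hg⟩ := SeparatingDual.exists_eq_one (R := 𝕜) hy
  have hA := (hfix (g.smulRight y) y).1 (by simp [hg])
  intro hSy
  rw [hSy, map_zero] at hA
  exact hy (by rw [← hA, map_zero])

lemma apply_mem_span_of_smulRight_apply_eq_iff [ContinuousAdd V] (hsurj : Function.Surjective φ)
    {S : V →L[𝕜] V} {x : V} {f : StrongDual 𝕜 V}
    (hfix : ∀ A y, A (f.smulRight x y) = y ↔ φ A (S y) = y)
    {z : V} (hz : f z = 1) (hSz : S z ≠ 0) (u : V) : S u ∈ 𝕜 ∙ S z := by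
  by_contra hu
  obtain ⟨B, hBu, hBz⟩ :=
    SeparatingDual.exists_continuousLinearMap_apply_eq_apply_eq hSz hu u z
  obtain ⟨A, rfl⟩ := hsurj B
  have hAu : A (f u • x) = u := (hfix A u).2 hBu
  have hAx : A x = z := by simpa [hz] using (hfix A z).2 hBz
  have hu_eq : f u • z = u := by rw [← hAx, ← map_smul, hAu]
  exact hu (Submodule.mem_span_singleton.2 ⟨f u, by rw [← map_smul, hu_eq]⟩)

end FixedPoints

variable {X : Type*} [NormedAddCommGroup X] [NormedSpace ℂ X] [CompleteSpace X]

theorem stmt5 (φ : (X →L[ℂ] X) → (X →L[ℂ] X))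
    (hsurj : Function.Surjective φ)
    (h : ∀ A B : X →L[ℂ] X,
      (∃ (x : X) (f : X →L[ℂ] ℂ), x ≠ 0 ∧ f ≠ 0 ∧ B = f.smulRight x) →
      {y : X | (A * B) y = y} = {y : X | (φ A * φ B) y = y}) :
    ∀ T : X →L[ℂ] X, (∃ (x : X) (f : X →L[ℂ] ℂ), x ≠ 0 ∧ f ≠ 0 ∧ T = f.smulRight x) →
      ∃ (x : X) (f : X →L[ℂ] ℂ), x ≠ 0 ∧ f ≠ 0 ∧ φ T = f.smulRight x := by
  rintro T ⟨x, f, hx, hf, rfl⟩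
  set S := φ (f.smulRight x)
  have hfix : ∀ A y, A (f.smulRight x y) = y ↔ φ A (S y) = y := fun A y =>
    Set.ext_iff.1 (h A _ ⟨x, f, hx, hf, rfl⟩) y
  obtain ⟨w, hw⟩ := DFunLike.ne_iff.1 hf
  obtain ⟨z, hz⟩ : ∃ z, f z = 1 := ⟨(f w)⁻¹ • w, by simp_all⟩
  have hSz : S z ≠ 0 := apply_ne_zero_of_apply_eq_iff hfix (by simpa [hz] using hx)
  obtain ⟨g, hg⟩ := SeparatingDual.exists_eq_one (R := ℂ) hSz
  refine ⟨S z, g ∘L S, hSz, DFunLike.ne_iff.2 ⟨z, by simp [hg]⟩, ?_⟩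
  exact eq_smulRight_of_forall_mem_span hg
    (apply_mem_span_of_smulRight_apply_eq_iff hsurj hfix hz hSz)
end

section
/- Let X be a complex Banach space with dim X ≥ 3 and φ : B(X) → B(X) a surjective map such that Fix(AB) = Fix(φ(A)φ(B)) for all A ∈ B(X) and all rank-one B. If additionally φ(I) = I and φ preserves rank-one operators, then φ(P) = P for every rank-one idempotent P. -/
/-!
Write `P = x ⊗ f` with `f x = 1`. Taking `A = I` gives `Fix P = Fix (φ P)`, so the rank-one
operator `φ P` fixes `x` and hence is a rank-one idempotent `x ⊗ k` with the same range.
It remains to see `k = f`, i.e. `ker f ⊆ ker k`. If `f w = 0` but `k w ≠ 0`, surjectivity gives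
`A` with `φ A = (k w)⁻¹ • (w ⊗ k)`; then `w` is fixed by `φ A * φ P` but not by `A * P`,
which kills `w`.
-/

open ContinuousLinearMap

variable {X : Type*} [NormedAddCommGroup X] [NormedSpace ℂ X] [CompleteSpace X]

namespace ContinuousLinearMap

variable {𝕜 E : Type*} [NontriviallyNormedField 𝕜] [NormedAddCommGroup E] [NormedSpace 𝕜 E]

theorem smulRight_apply_self {f : E →L[𝕜] 𝕜} {x : E} (hfx : f x = 1) :
    f.smulRight x x = x := by
  rw [smulRight_apply, hfx, one_smul]

theorem eq_of_ker_le_of_apply_eq_one {f k : E →L[𝕜] 𝕜} {x : E} (hfx : f x = 1) (hkx : k x = 1)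
    (hker : ∀ w, f w = 0 → k w = 0) : k = f := by
  ext y
  have hy : f (y - f y • x) = 0 := by simp [hfx]
  simpa [hkx, sub_eq_zero] using hker _ hy

theorem exists_smulRight_eq_of_apply_eq_self {g : E →L[𝕜] 𝕜} {u x : E} (hx : x ≠ 0)
    (hfix : g.smulRight u x = x) : ∃ k : E →L[𝕜] 𝕜, k x = 1 ∧ g.smulRight u = k.smulRight x := by
  rw [smulRight_apply] at hfix
  have hgx : g x ≠ 0 := by
    rintro hgx
    rw [hgx, zero_smul] at hfix
    exact hx hfix.symm
  have hu : u = (g x)⁻¹ • x := by rw [eq_inv_smul_iff₀ hgx, hfix]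
  refine ⟨(g x)⁻¹ • g, by simp [inv_mul_cancel₀ hgx], ?_⟩
  ext y
  simp [hu, smul_smul, mul_comm]

theorem apply_eq_zero_of_fixedPoints_eq {f k : E →L[𝕜] 𝕜} {x : E} (hkx : k x = 1)
    (hmatch : ∀ B : E →L[𝕜] E, ∃ A : E →L[𝕜] E,
      {y | (A * f.smulRight x) y = y} = {y | (B * k.smulRight x) y = y})
    (w : E) (hfw : f w = 0) : k w = 0 := by
  by_contra hkw
  obtain ⟨A, hA⟩ := hmatch ((k w)⁻¹ • k.smulRight w)
  have hw : w ∈ {y | (A * f.smulRight x) y = y} := by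
    rw [hA]
    simp [smul_smul, hkx, inv_mul_cancel₀ hkw]
  have hw0 : w = 0 := by simpa [hfw, eq_comm] using hw
  simp [hw0] at hkw

end ContinuousLinearMap

theorem stmt16_general (φ : (X →L[ℂ] X) → (X →L[ℂ] X))
    (hsurj : Function.Surjective φ)
    (h : ∀ A B : X →L[ℂ] X,
      (∃ (x : X) (f : X →L[ℂ] ℂ), x ≠ 0 ∧ f ≠ 0 ∧ B = f.smulRight x) →
      {y : X | (A * B) y = y} = {y : X | (φ A * φ B) y = y})
    (hI : φ 1 = 1)
    (hrank : ∀ T : X →L[ℂ] X,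
      (∃ (x : X) (f : X →L[ℂ] ℂ), x ≠ 0 ∧ f ≠ 0 ∧ T = f.smulRight x) →
      ∃ (x : X) (f : X →L[ℂ] ℂ), x ≠ 0 ∧ f ≠ 0 ∧ φ T = f.smulRight x) :
    ∀ P : X →L[ℂ] X, (∃ (x : X) (f : X →L[ℂ] ℂ), f x = 1 ∧ P = f.smulRight x) →
      φ P = P := by
  rintro P ⟨x, f, hfx, rfl⟩
  have hx : x ≠ 0 := ne_zero_of_map (f := f) (hfx ▸ one_ne_zero)
  have hP : ∃ (x' : X) (f' : X →L[ℂ] ℂ), x' ≠ 0 ∧ f' ≠ 0 ∧ f.smulRight x = f'.smulRight x' :=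
    ⟨x, f, hx, by rintro rfl; simp at hfx, rfl⟩
  obtain ⟨u, g, -, -, hφP⟩ := hrank _ hP
  have hfix := h 1 _ hP
  rw [hI, one_mul, one_mul, hφP] at hfix
  have hxfix : x ∈ {y | g.smulRight u y = y} := hfix ▸ smulRight_apply_self hfx
  obtain ⟨k, hkx, hgk⟩ := exists_smulRight_eq_of_apply_eq_self hx hxfix
  have hmatch (B : X →L[ℂ] X) :
      ∃ A : X →L[ℂ] X, {y | (A * f.smulRight x) y = y} = {y | (B * k.smulRight x) y = y} := by
    obtain ⟨A, rfl⟩ := hsurj B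
    exact ⟨A, by rw [h A _ hP, hφP, hgk]⟩
  rw [hφP, hgk, eq_of_ker_le_of_apply_eq_one hfx hkx (apply_eq_zero_of_fixedPoints_eq hkx hmatch)]

theorem stmt16 (hdim : 3 ≤ Module.rank ℂ X) (φ : (X →L[ℂ] X) → (X →L[ℂ] X))
    (hsurj : Function.Surjective φ)
    (h : ∀ A B : X →L[ℂ] X,
      (∃ (x : X) (f : X →L[ℂ] ℂ), x ≠ 0 ∧ f ≠ 0 ∧ B = f.smulRight x) →
      {y : X | (A * B) y = y} = {y : X | (φ A * φ B) y = y})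
    (hI : φ 1 = 1)
    (hrank : ∀ T : X →L[ℂ] X,
      (∃ (x : X) (f : X →L[ℂ] ℂ), x ≠ 0 ∧ f ≠ 0 ∧ T = f.smulRight x) →
      ∃ (x : X) (f : X →L[ℂ] ℂ), x ≠ 0 ∧ f ≠ 0 ∧ φ T = f.smulRight x) :
    ∀ P : X →L[ℂ] X, (∃ (x : X) (f : X →L[ℂ] ℂ), f x = 1 ∧ P = f.smulRight x) →
      φ P = P :=
  stmt16_general φ hsurj h hI hrank
end

section
/- Let X be a complex Banach space with dim X ≥ 3 and φ : B(X) → B(X) a surjective map satisfying Fix(AB) = Fix(φ(A)φ(B)) for all A ∈ B(X) and all rank-one B ∈ B(X). Then φ(I) = I or φ(I) = −I. -/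
/-!
For `x ≠ 0` pick `f` with `f x = 1`; then `P = f.smulRight x` is a rank-one idempotent whose
fixed points form the line `ℂ ∙ x`. With `A = B = P` the fixed points of `(φ P)²` are that line,
and `φ P` maps them into themselves, so `φ P x = ± x`. With `A = 1`, `B = P` the vector `x` is
fixed by `φ 1 * φ P`, hence `φ 1 x = ± x` for every `x`; an additive map with this property on
a space without `2`-torsion is `± id`.
-/

open ContinuousLinearMap

variable {X : Type*} [NormedAddCommGroup X] [NormedSpace ℂ X] [CompleteSpace X]

theorem AddMonoidHom.forall_eq_or_forall_eq_neg_of_forall_apply_eq_or_eq_neg {M : Type*}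
    [AddCommGroup M] [IsAddTorsionFree M] (T : M →+ M) (hT : ∀ x, T x = x ∨ T x = -x) :
    (∀ x, T x = x) ∨ ∀ x, T x = -x := by
  refine or_iff_not_imp_left.mpr fun hne x => ?_
  obtain ⟨y, hy⟩ := not_forall.mp hne
  have hTy : T y = -y := (hT y).resolve_left hy
  rcases hT x with hTx | hTx
  · rcases hT (x + y) with hxy | hxy <;> rw [map_add, hTx, hTy] at hxy
    · have hy0 : y = 0 := neg_eq_self.mp (add_left_cancel hxy)
      simp [hy0] at hy
    · have hx0 : x = 0 := by rwa [neg_add, add_left_inj, self_eq_neg] at hxy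
      simp [hx0]
  · exact hTx

theorem LinearMap.apply_eq_or_eq_neg_of_setOf_apply_apply_eq_self {K M : Type*} [Field K]
    [AddCommGroup M] [Module K M] {R : M →ₗ[K] M} {x : M}
    (hR : {y | R (R y) = y} = (K ∙ x : Set M)) : R x = x ∨ R x = -x := by
  rcases eq_or_ne x 0 with rfl | hx
  · simp
  have hRRx : R (R x) = x := (Set.ext_iff.mp hR x).mpr (Submodule.mem_span_singleton_self x)
  obtain ⟨c, hc⟩ :=
    Submodule.mem_span_singleton.mp <| (Set.ext_iff.mp hR (R x)).mp (congrArg R hRRx)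
  have hcc : c * c = 1 := smul_left_injective K hx <| by
    simp only [one_smul, mul_smul, hc, ← map_smul, hRRx]
  rcases mul_self_eq_one_iff.mp hcc with rfl | rfl <;> simp [← hc]

namespace ContinuousLinearMap

variable {K M : Type*} [Field K] [TopologicalSpace K] [AddCommGroup M]
  [Module K M] [TopologicalSpace M] [ContinuousSMul K M]

theorem smulRight_mul_self_of_apply_eq_one {f : M →L[K] K} {x : M} (hfx : f x = 1) :
    f.smulRight x * f.smulRight x = f.smulRight x := by
  ext y
  simp [hfx]

theorem setOf_smulRight_apply_eq_self_of_apply_eq_one {f : M →L[K] K} {x : M} (hfx : f x = 1) :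
    {y | f.smulRight x y = y} = (K ∙ x : Set M) := by
  ext y
  simp only [Set.mem_ofPred_eq, smulRight_apply, SetLike.mem_coe, Submodule.mem_span_singleton]
  constructor
  · exact fun hy => ⟨f y, hy⟩
  · rintro ⟨a, rfl⟩
    simp [hfx]

variable [IsTopologicalRing K] [SeparatingDual K M]

theorem apply_one_eq_or_eq_neg_of_setOf_mul_apply_eq_self {φ : (M →L[K] M) → (M →L[K] M)}
    (h : ∀ A B : M →L[K] M,
      (∃ (x : M) (f : M →L[K] K), x ≠ 0 ∧ f ≠ 0 ∧ B = f.smulRight x) →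
      {y : M | (A * B) y = y} = {y : M | (φ A * φ B) y = y}) (x : M) :
    φ 1 x = x ∨ φ 1 x = -x := by
  rcases eq_or_ne x 0 with rfl | hx
  · simp
  obtain ⟨f, hfx⟩ := SeparatingDual.exists_eq_one (R := K) hx
  set P := f.smulRight x
  have hPP : P * P = P := smulRight_mul_self_of_apply_eq_one hfx
  have hP : ∃ (x' : M) (f' : M →L[K] K), x' ≠ 0 ∧ f' ≠ 0 ∧ P = f'.smulRight x' :=
    ⟨x, f, hx, fun hf => by simp [hf] at hfx, rfl⟩
  have hfix : {y | P y = y} = (K ∙ x : Set M) := setOf_smulRight_apply_eq_self_of_apply_eq_one hfx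
  have hR : φ P x = x ∨ φ P x = -x :=
    LinearMap.apply_eq_or_eq_neg_of_setOf_apply_apply_eq_self (R := (φ P).toLinearMap) <| by
      rw [← hfix]
      calc {y | φ P (φ P y) = y} = {y | (P * P) y = y} := (h P P hP).symm
        _ = {y | P y = y} := by rw [hPP]
  have hTR : φ 1 (φ P x) = x := by
    have hxP : x ∈ {y | (1 * P) y = y} := by simp [P, hfx]
    exact (Set.ext_iff.mp (h 1 P hP) x).mp hxP
  rcases hR with hR | hR <;> rw [hR] at hTR
  · exact .inl hTR
  · exact .inr (by rwa [map_neg, neg_eq_iff_eq_neg] at hTR)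

end ContinuousLinearMap

theorem stmt17_general (φ : (X →L[ℂ] X) → (X →L[ℂ] X))
    (h : ∀ A B : X →L[ℂ] X,
      (∃ (x : X) (f : X →L[ℂ] ℂ), x ≠ 0 ∧ f ≠ 0 ∧ B = f.smulRight x) →
      {y : X | (A * B) y = y} = {y : X | (φ A * φ B) y = y}) :
    φ 1 = 1 ∨ φ 1 = -1 := by
  have : IsAddTorsionFree X := .of_isTorsionFree ℂ X
  have hφ1 := apply_one_eq_or_eq_neg_of_setOf_mul_apply_eq_self h
  rcases (φ 1).toLinearMap.toAddMonoidHom.forall_eq_or_forall_eq_neg_of_forall_apply_eq_or_eq_neg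
    hφ1 with hT | hT
  · exact .inl (ext hT)
  · exact .inr (ext hT)

theorem stmt17 (hdim : 3 ≤ Module.rank ℂ X) (φ : (X →L[ℂ] X) → (X →L[ℂ] X))
    (hsurj : Function.Surjective φ)
    (h : ∀ A B : X →L[ℂ] X,
      (∃ (x : X) (f : X →L[ℂ] ℂ), x ≠ 0 ∧ f ≠ 0 ∧ B = f.smulRight x) →
      {y : X | (A * B) y = y} = {y : X | (φ A * φ B) y = y}) :
    φ 1 = 1 ∨ φ 1 = -1 :=
  stmt17_general φ h
end

section
/- Let X be a complex Banach space with dim X ≥ 3 and φ : B(X) → B(X) a surjective map satisfying Fix(AB) = Fix(φ(A)φ(B)) for all A ∈ B(X) and all rank-one B ∈ B(X). Then for every non-scalar A ∈ B(X), φ(A) = A or φ(A) = −A, and there is a bijection γ : ℂ → ℂ with φ(λI) = γ(λ)I for all λ ∈ ℂ. -/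
open ContinuousLinearMap

variable {X : Type*} [NormedAddCommGroup X] [NormedSpace ℂ X] [CompleteSpace X]

/-!
Write `f ⊗ x` for the rank-one operator `y ↦ f y • x`. The fixed points of `A (f ⊗ x)` are the
`y` with `y = f y • A x`, so they lie on the line through `A x`. As `φ` is surjective, `φ A` can be
any operator, and testing the hypothesis against well-chosen operators shows that `φ (f ⊗ x)` is
nonzero, of rank one, with the kernel of `f` and the range of `x`: `φ (f ⊗ x) = c • f ⊗ x`.
If `f₁ x₂ * f₂ x₁ = 1`, then `x₁` is fixed by `(f₁ ⊗ x₁) (f₂ ⊗ x₂)`, which forces the scales to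
satisfy `c₁ * c₂ = 1`; connecting any two rank-one operators through a third one (possible once
the dimension is at least `2`) shows that the scale is a constant `ε` with `ε ^ 2 = 1`.
Finally, `A` is determined by the fixed points of the `A (f ⊗ x)` (take `f (A x) = 1`), so
`φ A = ε • A`.
-/

section LinearAlgebra

variable {R V : Type*} [Field R] [AddCommGroup V] [Module R V]

theorem exists_notMem_span_singleton (hV : 2 ≤ Module.rank R V) (x : V) : ∃ y, y ∉ R ∙ x := by
  by_contra! hx
  have : Module.rank R V ≤ 1 := calc
    Module.rank R V = Module.rank R (R ∙ x) := by rw [Submodule.eq_top_iff'.mpr hx, rank_top]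
    _ ≤ 1 := by simpa using rank_span_le ({x} : Set V)
  exact absurd (hV.trans this) (by norm_num)

theorem linearIndependent_pair_of_notMem_span_singleton {x y : V} (hx : x ≠ 0) (hy : y ∉ R ∙ x) :
    LinearIndependent R ![x, y] :=
  (LinearIndependent.pair_iff' hx).mpr fun a ha => hy (Submodule.mem_span_singleton.mpr ⟨a, ha⟩)

end LinearAlgebra

section SeparatingDual

variable {R V W : Type*} [Field R] [TopologicalSpace R] [AddCommGroup V] [TopologicalSpace V]
  [Module R V]

theorem StrongDual.exists_eq_one {f : StrongDual R V} (hf : f ≠ 0) : ∃ z, f z = 1 := by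
  obtain ⟨z, hz⟩ := DFunLike.ne_iff.mp hf
  exact ⟨(f z)⁻¹ • z, by simpa using inv_mul_cancel₀ hz⟩

theorem StrongDual.exists_apply_ne_zero_and_apply_ne_zero {f g : StrongDual R V} (hf : f ≠ 0)
    (hg : g ≠ 0) : ∃ z, f z ≠ 0 ∧ g z ≠ 0 := by
  obtain ⟨a, ha⟩ := DFunLike.ne_iff.mp hf
  obtain ⟨b, hb⟩ := DFunLike.ne_iff.mp hg
  by_cases hga : g a = 0
  · by_cases hfb : f b = 0
    · exact ⟨a + b, by simpa [hfb] using ha, by simpa [hga] using hb⟩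
    · exact ⟨b, hfb, hb⟩
  · exact ⟨a, ha, hga⟩

variable [IsTopologicalRing R]

theorem StrongDual.exists_eq_smul_of_ker_le {f g : StrongDual R V} (hf : f ≠ 0)
    (h : ∀ z, f z = 0 → g z = 0) : ∃ c : R, g = c • f := by
  obtain ⟨z, hz⟩ := exists_eq_one hf
  refine ⟨g z, ext fun y => ?_⟩
  have := h (y - f y • z) (by simp [hz])
  simp only [map_sub, map_smul, smul_eq_mul, sub_eq_zero] at this
  simp [this, mul_comm]

theorem exists_eq_smulRight_of_forall_mem_span_singleton [AddCommGroup W] [TopologicalSpace W]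
    [Module R W] [ContinuousSMul R W] [SeparatingDual R W] {D : V →L[R] W} {u : W} (hu : u ≠ 0)
    (h : ∀ y, D y ∈ R ∙ u) : ∃ g : StrongDual R V, D = g.smulRight u := by
  obtain ⟨k, hk⟩ := SeparatingDual.exists_eq_one (R := R) hu
  refine ⟨k.comp D, ext fun y => ?_⟩
  obtain ⟨c, hc⟩ := Submodule.mem_span_singleton.mp (h y)
  simp [← hc, hk]

variable [SeparatingDual R V]

theorem exists_dual_forall_apply_eq {ι : Type*} [Finite ι] {v : ι → V}
    (hv : LinearIndependent R v) (a : ι → R) : ∃ f : StrongDual R V, ∀ i, f (v i) = a i := by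
  classical
  have := Fintype.ofFinite ι
  obtain ⟨f, hf⟩ := SeparatingDual.dualMap_surjective_iff.mpr
    (linearIndependent_iff_injective_fintypeLinearCombination.mp hv)
    (Fintype.linearCombination R a)
  refine ⟨f, fun i => ?_⟩
  simpa using LinearMap.congr_fun hf (Pi.single i 1)

theorem exists_continuousLinearMap_forall_apply_eq [AddCommGroup W] [TopologicalSpace W]
    [Module R W] [ContinuousAdd W] [ContinuousSMul R W] {ι : Type*} [Finite ι] {v : ι → V}
    (hv : LinearIndependent R v) (w : ι → W) : ∃ T : V →L[R] W, ∀ i, T (v i) = w i := by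
  classical
  have := Fintype.ofFinite ι
  choose f hf using fun j => exists_dual_forall_apply_eq hv (Pi.single j 1)
  refine ⟨∑ j, (f j).smulRight (w j), fun i => ?_⟩
  simp [hf, Pi.single_apply]

theorem ContinuousLinearMap.apply_eq_of_forall_smul_apply_eq_iff {A B : V →L[R] V}
    (h : ∀ (x : V) (f : StrongDual R V), x ≠ 0 → f ≠ 0 → ∀ y, f y • A x = y ↔ f y • B x = y)
    {x : V} (hAx : A x ≠ 0) : B x = A x := by
  have hx : x ≠ 0 := by rintro rfl; exact hAx (map_zero A)
  obtain ⟨f, hf⟩ := SeparatingDual.exists_eq_one (R := R) hAx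
  have hf0 : f ≠ 0 := by rintro rfl; simp at hf
  simpa [hf] using (h x f hx hf0 (A x)).mp (by rw [hf, one_smul])

theorem ContinuousLinearMap.eq_of_forall_smul_apply_eq_iff {A B : V →L[R] V}
    (h : ∀ (x : V) (f : StrongDual R V), x ≠ 0 → f ≠ 0 → ∀ y, f y • A x = y ↔ f y • B x = y) :
    A = B := by
  ext x
  by_cases hAx : A x = 0
  · by_cases hBx : B x = 0
    · rw [hAx, hBx]
    · exact apply_eq_of_forall_smul_apply_eq_iff (fun x f hx hf y => (h x f hx hf y).symm) hBx
  · exact (apply_eq_of_forall_smul_apply_eq_iff h hAx).symm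

end SeparatingDual

section FixRankOne

variable {R V : Type*} [Field R] [TopologicalSpace R] [AddCommGroup V] [TopologicalSpace V]
  [Module R V] [ContinuousSMul R V]

/-- `Fix(A B) = Fix(φ A φ B)` for every rank-one `B = f ⊗ x := f.smulRight x`, written pointwise
using `(A (f ⊗ x)) y = f y • A x`. -/
def PreservesFixRankOne (φ : (V →L[R] V) → V →L[R] V) : Prop :=
  ∀ (A : V →L[R] V) (x : V) (f : StrongDual R V), x ≠ 0 → f ≠ 0 →
    ∀ y, φ A (φ (f.smulRight x) y) = y ↔ f y • A x = y

namespace PreservesFixRankOne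

variable {φ : (V →L[R] V) → V →L[R] V} {x : V} {f : StrongDual R V}

theorem mul_eq_one_of_apply_mul_apply_eq_one (hφ : PreservesFixRankOne φ) {x₁ x₂ : V}
    {f₁ f₂ : StrongDual R V} {c₁ c₂ : R} (hx₁ : x₁ ≠ 0)
    (h₁ : φ (f₁.smulRight x₁) = c₁ • f₁.smulRight x₁)
    (h₂ : φ (f₂.smulRight x₂) = c₂ • f₂.smulRight x₂) (h : f₁ x₂ * f₂ x₁ = 1) :
    c₁ * c₂ = 1 := by
  have hx₂ : x₂ ≠ 0 := by rintro rfl; simp at h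
  have hf₂ : f₂ ≠ 0 := by rintro rfl; simp at h
  have hfix := (hφ (f₁.smulRight x₁) x₂ f₂ hx₂ hf₂ x₁).mpr (by simp [smul_smul, mul_comm, h])
  simp only [h₁, h₂, smul_apply, smulRight_apply, map_smul, smul_smul] at hfix
  have hscal := smul_left_injective R hx₁ (hfix.trans (one_smul R x₁).symm)
  linear_combination hscal - c₁ * c₂ * h

variable [IsTopologicalRing R] [SeparatingDual R V]

theorem apply_smulRight_ne_zero (hφ : PreservesFixRankOne φ) (hx : x ≠ 0) (hf : f ≠ 0) :
    φ (f.smulRight x) ≠ 0 := by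
  obtain ⟨k, hk⟩ := SeparatingDual.exists_eq_one (R := R) hx
  obtain ⟨z, hz⟩ := StrongDual.exists_eq_one hf
  have hz0 : z ≠ 0 := by rintro rfl; simp at hz
  intro h0
  -- `z` is a fixed point of `(k ⊗ z) (f ⊗ x)`
  have := (hφ (k.smulRight z) x f hx hf z).mpr (by simp [hk, hz])
  simp only [h0, zero_apply, map_zero] at this
  exact hz0 this.symm

variable [ContinuousAdd V]

theorem exists_apply_smulRight_eq_smulRight (hφ : PreservesFixRankOne φ)
    (hsurj : Function.Surjective φ) (hx : x ≠ 0) (hf : f ≠ 0) :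
    ∃ (g : StrongDual R V) (u : V), u ≠ 0 ∧ φ (f.smulRight x) = g.smulRight u := by
  set D := φ (f.smulRight x)
  obtain ⟨v, hv⟩ : ∃ v, D v ≠ 0 := by
    by_contra! h0
    exact hφ.apply_smulRight_ne_zero hx hf (ext h0)
  suffices hD : ∀ y, D y ∈ R ∙ D v by
    obtain ⟨g, hg⟩ := exists_eq_smulRight_of_forall_mem_span_singleton hv hD
    exact ⟨g, D v, hv, hg⟩
  intro y
  by_contra hy
  obtain ⟨T, hT⟩ := exists_continuousLinearMap_forall_apply_eq
    (linearIndependent_pair_of_notMem_span_singleton hv hy) ![v, y]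
  obtain ⟨A, rfl⟩ := hsurj T
  -- both `v` and `y` are fixed points of `A (f ⊗ x)`, hence multiples of `A x`
  have hvA := (hφ A x f hx hf v).mp (by simpa using hT 0)
  have hyA := (hφ A x f hx hf y).mp (by simpa using hT 1)
  have hfv : f v ≠ 0 := by
    intro h0
    rw [h0, zero_smul] at hvA
    exact hv (by rw [← hvA, map_zero])
  have hDv : D v = f v • D (A x) := by rw [← map_smul, hvA]
  have hDy : D y = f y • D (A x) := by rw [← map_smul, hyA]
  refine hy (Submodule.mem_span_singleton.mpr ⟨f y * (f v)⁻¹, ?_⟩)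
  rw [hDv, hDy, smul_smul, mul_assoc, inv_mul_cancel₀ hfv, mul_one]

theorem exists_apply_smulRight_eq_smulRight_same_functional (hφ : PreservesFixRankOne φ)
    (hsurj : Function.Surjective φ) (hx : x ≠ 0) (hf : f ≠ 0) :
    ∃ u : V, u ≠ 0 ∧ φ (f.smulRight x) = f.smulRight u := by
  obtain ⟨g, u, hu, hD⟩ := hφ.exists_apply_smulRight_eq_smulRight hsurj hx hf
  have hker : ∀ z, f z = 0 → g z = 0 := by
    intro z hfz
    by_contra hgz
    obtain ⟨k, hk⟩ := SeparatingDual.exists_eq_one (R := R) hu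
    obtain ⟨A, hA⟩ := hsurj (k.smulRight ((g z)⁻¹ • z))
    -- `z` is a fixed point of `φ A φ (f ⊗ x)`, but `f z = 0`
    have hz := (hφ A x f hx hf z).mp (by simp [hA, hD, hk, smul_smul, mul_inv_cancel₀ hgz])
    rw [hfz, zero_smul] at hz
    exact hgz (by rw [← hz, map_zero])
  obtain ⟨c, rfl⟩ := StrongDual.exists_eq_smul_of_ker_le hf hker
  have hc : c ≠ 0 := by
    rintro rfl
    exact hφ.apply_smulRight_ne_zero hx hf (by rw [hD]; ext; simp)
  refine ⟨c • u, smul_ne_zero hc hu, ?_⟩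
  rw [hD]
  ext y
  simp [smul_smul, mul_comm]

theorem exists_apply_smulRight_eq_smul (hφ : PreservesFixRankOne φ)
    (hsurj : Function.Surjective φ) (hx : x ≠ 0) (hf : f ≠ 0) :
    ∃ c : R, c ≠ 0 ∧ φ (f.smulRight x) = c • f.smulRight x := by
  obtain ⟨u, -, hD⟩ := hφ.exists_apply_smulRight_eq_smulRight_same_functional hsurj hx hf
  obtain ⟨x₂, hx₂⟩ := StrongDual.exists_eq_one hf
  obtain ⟨f₂, hf₂⟩ := SeparatingDual.exists_eq_one (R := R) hx
  have hx₂0 : x₂ ≠ 0 := by rintro rfl; simp at hx₂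
  have hf₂0 : f₂ ≠ 0 := by rintro rfl; simp at hf₂
  obtain ⟨u₂, -, hD₂⟩ := hφ.exists_apply_smulRight_eq_smulRight_same_functional hsurj hx₂0 hf₂0
  -- `x` is a fixed point of `(f ⊗ x) (f₂ ⊗ x₂)`
  have hfix := (hφ (f.smulRight x) x₂ f₂ hx₂0 hf₂0 x).mpr (by simp [hx₂, hf₂])
  simp only [hD, hD₂, smulRight_apply, hf₂, one_smul] at hfix
  have hfu₂ : f u₂ ≠ 0 := by
    intro h0
    rw [h0, zero_smul] at hfix
    exact hx hfix.symm
  refine ⟨(f u₂)⁻¹, inv_ne_zero hfu₂, ?_⟩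
  rw [hD, ← hfix]
  ext y
  simp only [smulRight_apply, smul_apply, smul_smul]
  congr 1
  field_simp

theorem eq_of_notMem_span_singleton (hφ : PreservesFixRankOne φ)
    (hsurj : Function.Surjective φ) {x₁ x₂ : V} {f₁ f₂ : StrongDual R V} {c₁ c₂ : R}
    (hx₁ : x₁ ≠ 0) (hx₂ : x₂ ∉ R ∙ x₁) (hf₁ : f₁ ≠ 0) (hf₂ : f₂ ≠ 0)
    (h₁ : φ (f₁.smulRight x₁) = c₁ • f₁.smulRight x₁)
    (h₂ : φ (f₂.smulRight x₂) = c₂ • f₂.smulRight x₂) : c₁ = c₂ := by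
  obtain ⟨z, hz₁, hz₂⟩ := StrongDual.exists_apply_ne_zero_and_apply_ne_zero hf₁ hf₂
  obtain ⟨g, hg⟩ := exists_continuousLinearMap_forall_apply_eq
    (linearIndependent_pair_of_notMem_span_singleton hx₁ hx₂) ![(f₁ z)⁻¹, (f₂ z)⁻¹]
  have hz : z ≠ 0 := by rintro rfl; simp at hz₁
  have hx₂0 : x₂ ≠ 0 := by rintro rfl; exact hx₂ (zero_mem _)
  have hg₁ : g x₁ = (f₁ z)⁻¹ := hg 0
  have hg₂ : g x₂ = (f₂ z)⁻¹ := hg 1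
  have hg0 : g ≠ 0 := by rintro rfl; exact inv_ne_zero hz₁ hg₁.symm
  -- the scale `c` of `g ⊗ z` is inverse to both `c₁` and `c₂`
  obtain ⟨c, hc, hgz⟩ := hφ.exists_apply_smulRight_eq_smul hsurj hz hg0
  have e₁ := hφ.mul_eq_one_of_apply_mul_apply_eq_one hx₁ h₁ hgz
    (by rw [hg₁, mul_inv_cancel₀ hz₁])
  have e₂ := hφ.mul_eq_one_of_apply_mul_apply_eq_one hx₂0 h₂ hgz
    (by rw [hg₂, mul_inv_cancel₀ hz₂])
  exact mul_right_cancel₀ hc (e₁.trans e₂.symm)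

theorem exists_forall_apply_smulRight_eq_smul (hφ : PreservesFixRankOne φ)
    (hsurj : Function.Surjective φ) (hV : 2 ≤ Module.rank R V) :
    ∃ ε : R, ε * ε = 1 ∧ ∀ (x : V) (f : StrongDual R V), x ≠ 0 → f ≠ 0 →
      φ (f.smulRight x) = ε • f.smulRight x := by
  obtain ⟨x₀, hx₀⟩ := rank_pos_iff_exists_ne_zero.mp (lt_of_lt_of_le (by norm_num) hV)
  obtain ⟨f₀, hf₀⟩ := SeparatingDual.exists_eq_one (R := R) hx₀
  have hf₀0 : f₀ ≠ 0 := by rintro rfl; simp at hf₀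
  obtain ⟨ε, -, hε⟩ := hφ.exists_apply_smulRight_eq_smul hsurj hx₀ hf₀0
  refine ⟨ε, hφ.mul_eq_one_of_apply_mul_apply_eq_one hx₀ hε hε (by rw [hf₀, one_mul]),
    fun x f hx hf => ?_⟩
  obtain ⟨c, -, hc⟩ := hφ.exists_apply_smulRight_eq_smul hsurj hx hf
  suffices c = ε by rwa [← this]
  by_cases hxx₀ : x ∈ R ∙ x₀
  · obtain ⟨y, hy⟩ := exists_notMem_span_singleton hV x₀
    have hyx : y ∉ R ∙ x := fun h => hy ((Submodule.span_singleton_le_iff_mem _ _).mpr hxx₀ h)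
    have hy0 : y ≠ 0 := by rintro rfl; exact hy (zero_mem _)
    obtain ⟨c', -, hc'⟩ := hφ.exists_apply_smulRight_eq_smul hsurj hy0 hf₀0
    have hcc' : c = c' := hφ.eq_of_notMem_span_singleton hsurj hx hyx hf hf₀0 hc hc'
    have hεc' : ε = c' := hφ.eq_of_notMem_span_singleton hsurj hx₀ hy hf₀0 hf₀0 hε hc'
    rw [hcc', hεc']
  · exact (hφ.eq_of_notMem_span_singleton hsurj hx₀ hxx₀ hf₀0 hf hε hc).symm

theorem exists_forall_eq_smul (hφ : PreservesFixRankOne φ) (hsurj : Function.Surjective φ)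
    (hV : 2 ≤ Module.rank R V) : ∃ ε : R, ε * ε = 1 ∧ ∀ A, φ A = ε • A := by
  obtain ⟨ε, hε2, hε⟩ := hφ.exists_forall_apply_smulRight_eq_smul hsurj hV
  refine ⟨ε, hε2, fun A => ?_⟩
  have hA : ε • φ A = A := eq_of_forall_smul_apply_eq_iff fun x f hx hf y => by
    rw [← hφ A x f hx hf y, hε x f hx hf]
    simp only [smul_apply, smulRight_apply, map_smul, smul_comm ε (f y)]
  simpa [smul_smul, hε2] using congrArg (ε • ·) hA

end PreservesFixRankOne

end FixRankOne

theorem stmt18 (hdim : 3 ≤ Module.rank ℂ X) (φ : (X →L[ℂ] X) → (X →L[ℂ] X))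
    (hsurj : Function.Surjective φ)
    (h : ∀ A B : X →L[ℂ] X,
      (∃ (x : X) (f : X →L[ℂ] ℂ), x ≠ 0 ∧ f ≠ 0 ∧ B = f.smulRight x) →
      {y : X | (A * B) y = y} = {y : X | (φ A * φ B) y = y}) :
    (∀ A : X →L[ℂ] X, (∀ l : ℂ, A ≠ l • (1 : X →L[ℂ] X)) → φ A = A ∨ φ A = -A) ∧
    ∃ γ : ℂ → ℂ, Function.Bijective γ ∧
      ∀ l : ℂ, φ (l • (1 : X →L[ℂ] X)) = γ l • (1 : X →L[ℂ] X) := by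
  have hφ : PreservesFixRankOne φ := fun A x f hx hf y => by
    simpa using (Set.ext_iff.mp (h A _ ⟨x, f, hx, hf, rfl⟩) y).symm
  obtain ⟨ε, hε2, hε⟩ := hφ.exists_forall_eq_smul hsurj (le_trans (by norm_num) hdim)
  refine ⟨fun A _ => ?_, (ε * ·), mulLeft_bijective₀ ε (left_ne_zero_of_mul_eq_one hε2),
    fun l => by rw [hε, smul_smul]⟩
  rcases mul_self_eq_one_iff.mp hε2 with rfl | rfl
  · exact .inl ((hε A).trans (one_smul ℂ A))
  · exact .inr ((hε A).trans (neg_one_smul ℂ A))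
end
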